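/- Tuning to stalling and the stalling characterization (Theorems 'tuning' and 'iffstalling'): One always has W *ᵥ p = W_mar *ᵥ p, and in particular (W *ᵥ p) i = 0 for every state i that is not an endpoint of an observable edge. Assume moreover that the kernels of W and of W_hid are one-dimensional and that r : Fin n → ℝ is strictly positive with ∑ i, r i = 1 and W *ᵥ r = 0 (the steady state of the full dynamics). Then all observable steady currents vanish, ∀ μ, W i_μ j_μ * r j_μ = W j_μ i_μ * r i_μ, if and only if all effective affinities vanish, ∀ μ, Q μ = 0; and when these equivalent conditions hold, r = p (the steady state coincides with the stalling state). -/
import Mathlib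

open Matrix

lemma aux_diag {n : ℕ} (a b k : Fin n) (hab : a ≠ b) (c1 c2 : ℝ) :
    (if a = k then (if b = k then c1 else 0) - (if a = k then c2 else 0) else 0)
    + (if b = k then (if a = k then c2 else 0) - (if b = k then c1 else 0) else 0)
    = -(if b = k then c1 else 0) - (if a = k then c2 else 0) := by
  by_cases h1 : a = k <;> by_cases h2 : b = k <;> simp_all

lemma aux_offdiag {n : ℕ} (a b k l : Fin n) (hab : a ≠ b) (hkl : k ≠ l) (c1 c2 : ℝ) :
    (if a = k then (if b = l then c1 else 0) - (if a = l then c2 else 0) else 0)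
    + (if b = k then (if a = l then c2 else 0) - (if b = l then c1 else 0) else 0)
    = (if a = k ∧ b = l then c1 else 0) + (if b = k ∧ a = l then c2 else 0) := by
  by_cases h1 : a = k <;> by_cases h2 : b = l <;> by_cases h3 : b = k <;>
    by_cases h4 : a = l <;> simp_all

lemma aux_row {n : ℕ} (a b k : Fin n) (hab : a ≠ b) (c1 c2 : ℝ) (v : Fin n → ℝ)
    (hcur : c1 * v b = c2 * v a) :
    ∑ l, ((if a = k then (if b = l then c1 else 0) - (if a = l then c2 else 0) else 0)
      + (if b = k then (if a = l then c2 else 0) - (if b = l then c1 else 0) else 0)) * v l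
    = 0 := by
  simp only [add_mul, sub_mul, ite_mul, zero_mul, Finset.sum_add_distrib,
    Finset.sum_sub_distrib, Finset.sum_ite_eq, Finset.mem_univ, if_true]
  by_cases h1 : a = k <;> by_cases h2 : b = k <;> simp_all

/-- Tuning to stalling and the stalling characterization
(Theorems "tuning" and "iffstalling"). -/
theorem tuning_and_stalling {n m : ℕ}
    (W Whid : Matrix (Fin n) (Fin n) ℝ)
    (hW1 : ∀ i j, i ≠ j → 0 ≤ W i j)
    (hW2 : ∀ j, ∑ i, W i j = 0)
    (ei ej : Fin m → Fin n)
    (hij : ∀ μ, ei μ ≠ ej μ)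
    (hdist : ∀ μ ν, μ ≠ ν → ({ei μ, ej μ} : Finset (Fin n)) ≠ {ei ν, ej ν})
    (hpos1 : ∀ μ, 0 < W (ei μ) (ej μ))
    (hpos2 : ∀ μ, 0 < W (ej μ) (ei μ))
    (hH1 : ∀ μ, Whid (ei μ) (ej μ) = 0)
    (hH2 : ∀ μ, Whid (ej μ) (ei μ) = 0)
    (hH3 : ∀ i, Whid i i = W i i
        + ∑ μ ∈ Finset.univ.filter (fun μ => ej μ = i), W (ei μ) (ej μ)
        + ∑ μ ∈ Finset.univ.filter (fun μ => ei μ = i), W (ej μ) (ei μ))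
    (hH4 : ∀ i j, i ≠ j →
      (∀ μ, ¬(i = ei μ ∧ j = ej μ) ∧ ¬(i = ej μ ∧ j = ei μ)) → Whid i j = W i j)
    (p : Fin n → ℝ) (hp1 : ∀ i, 0 < p i) (hp2 : ∑ i, p i = 1)
    (hp3 : Whid *ᵥ p = 0)
    (Q : Fin m → ℝ)
    (hQ : ∀ μ, Q μ = Real.log (W (ei μ) (ej μ) * p (ej μ) / (W (ej μ) (ei μ) * p (ei μ))))
    (M : (Fin m → ℝ) → Matrix (Fin n) (Fin n) ℝ)
    (hM1 : ∀ q μ, M q (ei μ) (ej μ) = W (ei μ) (ej μ) * Real.exp (-q μ))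
    (hM2 : ∀ q μ, M q (ej μ) (ei μ) = W (ej μ) (ei μ) * Real.exp (q μ))
    (hM3 : ∀ q i j, (∀ μ, ¬(i = ei μ ∧ j = ej μ) ∧ ¬(i = ej μ ∧ j = ei μ)) → M q i j = W i j) :
    (W *ᵥ p = (W - Whid) *ᵥ p) ∧
    (∀ i : Fin n, (∀ μ, i ≠ ei μ ∧ i ≠ ej μ) → (W *ᵥ p) i = 0) ∧
    (Module.finrank ℝ (LinearMap.ker W.mulVecLin) = 1 →
     Module.finrank ℝ (LinearMap.ker Whid.mulVecLin) = 1 →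
     ∀ r : Fin n → ℝ, (∀ i, 0 < r i) → (∑ i, r i = 1) → W *ᵥ r = 0 →
       (((∀ μ, W (ei μ) (ej μ) * r (ej μ) = W (ej μ) (ei μ) * r (ei μ)) ↔
          (∀ μ, Q μ = 0)) ∧
        ((∀ μ, Q μ = 0) → r = p))) := by
  clear hW1 hW2 hM1 hM2 hM3
  -- The elementary marginal matrices attached to each edge
  set D : Fin m → Matrix (Fin n) (Fin n) ℝ := fun μ => fun k l =>
    (if ei μ = k then (if ej μ = l then W (ei μ) (ej μ) else 0)
        - (if ei μ = l then W (ej μ) (ei μ) else 0) else 0)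
    + (if ej μ = k then (if ei μ = l then W (ej μ) (ei μ) else 0)
        - (if ej μ = l then W (ei μ) (ej μ) else 0) else 0) with hD
  -- Decomposition of the marginal generator
  have hdec : W - Whid = ∑ μ, D μ := by
    ext k l
    rw [Matrix.sum_apply, Matrix.sub_apply]
    by_cases hkl : k = l
    · subst hkl
      have hterm : ∀ μ, D μ k k =
          -(if ej μ = k then W (ei μ) (ej μ) else 0)
          - (if ei μ = k then W (ej μ) (ei μ) else 0) := by
        intro μ
        exact aux_diag _ _ _ (hij μ) _ _
      rw [Finset.sum_congr rfl (fun μ _ => hterm μ), Finset.sum_sub_distrib,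
        Finset.sum_neg_distrib, hH3 k, Finset.sum_filter, Finset.sum_filter]
      ring
    · -- off-diagonal entries
      have hterm : ∀ μ, D μ k l =
          (if ei μ = k ∧ ej μ = l then W (ei μ) (ej μ) else 0)
          + (if ej μ = k ∧ ei μ = l then W (ej μ) (ei μ) else 0) := by
        intro μ
        exact aux_offdiag _ _ _ _ (hij μ) hkl _ _
      rw [Finset.sum_congr rfl (fun μ _ => hterm μ)]
      by_cases hc1 : ∃ μ0, ei μ0 = k ∧ ej μ0 = l
      · obtain ⟨μ0, h1, h2⟩ := hc1
        have hWhid : Whid k l = 0 := by rw [← h1, ← h2]; exact hH1 μ0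
        rw [hWhid, sub_zero, Finset.sum_eq_single μ0]
        · have hne : ¬(ej μ0 = k ∧ ei μ0 = l) := by
            rintro ⟨ha, hb⟩; exact hij μ0 (h1.trans ha.symm)
          simp [h1, h2, hne, Ne.symm hkl]
        · intro μ _ hμ
          have hna : ¬(ei μ = k ∧ ej μ = l) := by
            rintro ⟨ha, hb⟩
            exact hdist μ μ0 hμ (by rw [ha, hb, h1, h2])
          have hnb : ¬(ej μ = k ∧ ei μ = l) := by
            rintro ⟨ha, hb⟩
            refine hdist μ μ0 hμ ?_
            rw [ha, hb, Finset.pair_comm, h1, h2]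
          simp [hna, hnb]
        · simp
      · by_cases hc2 : ∃ μ0, ej μ0 = k ∧ ei μ0 = l
        · obtain ⟨μ0, h1, h2⟩ := hc2
          have hWhid : Whid k l = 0 := by rw [← h1, ← h2]; exact hH2 μ0
          rw [hWhid, sub_zero, Finset.sum_eq_single μ0]
          · have hne : ¬(ei μ0 = k ∧ ej μ0 = l) := by
              rintro ⟨ha, hb⟩; exact hij μ0 (ha.trans h1.symm)
            simp [h1, h2, hne, Ne.symm hkl]
          · intro μ _ hμ
            have hna : ¬(ei μ = k ∧ ej μ = l) := by
              rintro ⟨ha, hb⟩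
              refine hdist μ μ0 hμ ?_
              rw [ha, hb, ← h1, ← h2, Finset.pair_comm]
            have hnb : ¬(ej μ = k ∧ ei μ = l) := by
              rintro ⟨ha, hb⟩
              refine hdist μ μ0 hμ ?_
              rw [ha, hb, ← h1, ← h2]
            simp [hna, hnb]
          · simp
        · push_neg at hc1 hc2
          have hWhid : Whid k l = W k l := by
            refine hH4 k l hkl fun μ => ⟨?_, ?_⟩
            · rintro ⟨ha, hb⟩; exact hc1 μ ha.symm hb.symm
            · rintro ⟨ha, hb⟩; exact hc2 μ ha.symm hb.symm
          rw [hWhid, sub_self]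
          refine (Finset.sum_eq_zero fun μ _ => ?_).symm
          have hna : ¬(ei μ = k ∧ ej μ = l) := fun h => hc1 μ h.1 h.2
          have hnb : ¬(ej μ = k ∧ ei μ = l) := fun h => hc2 μ h.1 h.2
          simp [hna, hnb]
  -- Key: if the observable currents of v vanish then the marginal generator kills v
  have key : ∀ v : Fin n → ℝ,
      (∀ μ, W (ei μ) (ej μ) * v (ej μ) = W (ej μ) (ei μ) * v (ei μ)) →
      (W - Whid) *ᵥ v = 0 := by
    intro v hv
    have hsum : (∑ μ, D μ) *ᵥ v = ∑ μ, D μ *ᵥ v := by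
      funext k
      simp only [mulVec, dotProduct, Finset.sum_apply, Matrix.sum_apply, Finset.sum_mul]
      rw [Finset.sum_comm]
    rw [hdec, hsum]
    refine Finset.sum_eq_zero fun μ _ => ?_
    funext k
    exact aux_row _ _ k (hij μ) _ _ v (hv μ)
  -- Part 1
  have part1 : W *ᵥ p = (W - Whid) *ᵥ p := by
    rw [Matrix.sub_mulVec, hp3, sub_zero]
  refine ⟨part1, ?_, ?_⟩
  · -- Part 2
    intro i hi
    rw [part1]
    simp only [mulVec, dotProduct, Matrix.sub_apply]
    refine Finset.sum_eq_zero fun j _ => ?_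
    have hentry : W i j - Whid i j = 0 := by
      by_cases hji : i = j
      · subst hji
        rw [hH3 i, Finset.sum_eq_zero, Finset.sum_eq_zero]
        · ring
        · intro μ hμ
          exact absurd ((Finset.mem_filter.mp hμ).2).symm (hi μ).1
        · intro μ hμ
          exact absurd ((Finset.mem_filter.mp hμ).2).symm (hi μ).2
      · rw [hH4 i j hji fun μ => ⟨fun h => (hi μ).1 h.1, fun h => (hi μ).2 h.1⟩, sub_self]
    rw [hentry, zero_mul]
  · -- Part 3
    intro hk1 hk2 r hr1 hr2 hr3
    -- uniqueness of normalized kernel vectors in a 1-dimensional kernel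
    have kerlem : ∀ A : Matrix (Fin n) (Fin n) ℝ,
        Module.finrank ℝ (LinearMap.ker A.mulVecLin) = 1 →
        ∀ v w : Fin n → ℝ, A *ᵥ v = 0 → A *ᵥ w = 0 →
        (∑ i, v i = 1) → (∑ i, w i = 1) → w = v := by
      intro A hA v w hv hw hv1 hw1
      have hv0 : v ≠ 0 := by
        intro h; rw [h] at hv1; simp at hv1
      have hsp : Submodule.span ℝ {v} = LinearMap.ker A.mulVecLin := by
        apply Submodule.eq_of_le_of_finrank_le
        · rw [Submodule.span_singleton_le_iff_mem]
          simp [LinearMap.mem_ker, Matrix.mulVecLin_apply, hv]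
        · rw [hA, finrank_span_singleton hv0]
      have hwmem : w ∈ Submodule.span ℝ {v} := by
        rw [hsp]; simp [LinearMap.mem_ker, Matrix.mulVecLin_apply, hw]
      obtain ⟨c, rfl⟩ := Submodule.mem_span_singleton.mp hwmem
      have hc : c = 1 := by
        have hcs : ∑ i, (c • v) i = c * ∑ i, v i := by
          simp [Finset.mul_sum]
        rw [hw1, hv1, mul_one] at hcs
        exact hcs.symm
      rw [hc, one_smul]
    -- Q μ = 0 iff the stalling currents vanish
    have hQ0 : ∀ μ, (Q μ = 0 ↔ W (ei μ) (ej μ) * p (ej μ) = W (ej μ) (ei μ) * p (ei μ)) := by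
      intro μ
      have ha : 0 < W (ei μ) (ej μ) * p (ej μ) := mul_pos (hpos1 μ) (hp1 _)
      have hb : 0 < W (ej μ) (ei μ) * p (ei μ) := mul_pos (hpos2 μ) (hp1 _)
      have hx : 0 < W (ei μ) (ej μ) * p (ej μ) / (W (ej μ) (ei μ) * p (ei μ)) :=
        div_pos ha hb
      rw [hQ μ, Real.log_eq_zero]
      constructor
      · rintro (h | h | h)
        · linarith
        · exact (div_eq_one_iff_eq hb.ne').mp h
        · linarith
      · intro h
        right; left
        exact (div_eq_one_iff_eq hb.ne').mpr h
    -- from vanishing affinities, the steady state equals the stalling state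
    have main : (∀ μ, Q μ = 0) → r = p := by
      intro hq
      have hcurp : ∀ μ, W (ei μ) (ej μ) * p (ej μ) = W (ej μ) (ei μ) * p (ei μ) :=
        fun μ => (hQ0 μ).mp (hq μ)
      have h1 : (W - Whid) *ᵥ p = 0 := key p hcurp
      have h2 : W *ᵥ p = 0 := by
        rw [Matrix.sub_mulVec, hp3, sub_zero] at h1; exact h1
      exact kerlem W hk1 p r h2 hr3 hp2 hr2
    refine ⟨⟨?_, ?_⟩, main⟩
    · intro hcur
      have h1 : (W - Whid) *ᵥ r = 0 := key r hcur
      have h2 : Whid *ᵥ r = 0 := by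
        rw [Matrix.sub_mulVec, hr3] at h1
        funext i
        have := congrFun h1 i
        simp only [Pi.sub_apply, Pi.zero_apply, zero_sub, neg_eq_zero] at this
        simpa using this
      have hrp : r = p := kerlem Whid hk2 p r hp3 h2 hp2 hr2
      intro μ
      rw [hQ0 μ, ← hrp]
      exact hcur μ
    · intro hq μ
      rw [main hq]
      exact (hQ0 μ).mp (hq μ)
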